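/- arXiv:1302.4170 — 3 statements merged into one kernel-verified Lean document; each statement's English description precedes it below -/
import Mathlib

section
/- Let A₁ be a finite nonempty subset of F_p^* and suppose a₀' ∈ A₁ satisfies Σ_{a ∈ A₁} #(aA₁ ∩ a₀'A₁) ≥ (#A₁)³/#(A₁·A₁). Let A₂ = {a ∈ A₁ : #((a/a₀')A₁ ∩ A₁) ≥ (#A₁)²/(2·#(A₁·A₁))}. Then #A₂ ≥ (#A₁)²/(2·#(A₁·A₁)). -/
/-!
Rescaling by `a₀'⁻¹` turns each summand into `#((a / a₀') • A₁ ∩ A₁)`, which is at most `#A₁`.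
With `t = #A₁² / (2 #(A₁ A₁))`, the elements of `A₁` whose summand is below `t` contribute less
than `#A₁ · t`, which is half of the assumed lower bound `#A₁³ / #(A₁ A₁)` for the sum; the other
half must come from `A₂`, where each summand is at most `#A₁`, so `#A₂ · #A₁ ≥ #A₁ · t`.
-/

open Finset Pointwise

theorem Finset.card_smul_inter_smul_eq_card_div_smul_inter {K : Type*} [CommGroupWithZero K]
    [DecidableEq K] (s : Finset K) (a : K) {b : K} (hb : b ≠ 0) :
    #(a • s ∩ b • s) = #((a / b) • s ∩ s) := by
  rw [← card_smul_finset₀ hb ((a / b) • s ∩ s), smul_finset_inter₀ hb, smul_smul,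
    mul_div_cancel₀ a hb]

theorem Finset.sum_le_card_filter_mul_add_card_mul {ι R : Type*} [Semiring R] [LinearOrder R]
    [IsOrderedRing R] (s : Finset ι) (f : ι → R) {B t : R} (hB : ∀ i ∈ s, f i ≤ B)
    (ht : 0 ≤ t) [DecidablePred fun i => t ≤ f i] :
    ∑ i ∈ s, f i ≤ #(s.filter fun i => t ≤ f i) * B + #s * t := by
  rw [← sum_filter_add_sum_filter_not s fun i => t ≤ f i]
  gcongr
  · calc ∑ i ∈ s.filter (fun i => t ≤ f i), f i
        ≤ ∑ _i ∈ s.filter (fun i => t ≤ f i), B := sum_le_sum fun i hi => hB i (mem_filter.1 hi).1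
      _ = #(s.filter fun i => t ≤ f i) * B := by rw [sum_const, nsmul_eq_mul]
  · calc ∑ i ∈ s.filter (fun i => ¬t ≤ f i), f i
        ≤ ∑ _i ∈ s.filter (fun i => ¬t ≤ f i), t :=
          sum_le_sum fun i hi => (not_le.1 (mem_filter.1 hi).2).le
      _ = #(s.filter fun i => ¬t ≤ f i) * t := by rw [sum_const, nsmul_eq_mul]
      _ ≤ #s * t := by gcongr; exact filter_subset _ s

theorem stmt_4 {p : ℕ} [Fact p.Prime]
    (A₁ : Finset (ZMod p)) (hA₁ : A₁.Nonempty) (h0 : (0 : ZMod p) ∉ A₁)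
    (a₀' : ZMod p) (ha₀' : a₀' ∈ A₁)
    (hsum : ((A₁.card : ℚ) ^ 3) / ((A₁ * A₁).card : ℚ)
      ≤ ∑ a ∈ A₁, (((a • A₁) ∩ (a₀' • A₁)).card : ℚ))
    (A₂ : Finset (ZMod p))
    (hA₂ : A₂ = A₁.filter fun a =>
      ((A₁.card : ℚ) ^ 2) / (2 * ((A₁ * A₁).card : ℚ))
        ≤ (((((a / a₀' : ZMod p)) • A₁) ∩ A₁).card : ℚ)) :
    ((A₁.card : ℚ) ^ 2) / (2 * ((A₁ * A₁).card : ℚ)) ≤ (A₂.card : ℚ) := by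
  set t : ℚ := (#A₁ : ℚ) ^ 2 / (2 * #(A₁ * A₁))
  have ha₀'_ne : a₀' ≠ 0 := ne_of_mem_of_not_mem ha₀' h0
  have hsplit := sum_le_card_filter_mul_add_card_mul (B := (#A₁ : ℚ)) (t := t) A₁
    (fun a => (#((a / a₀') • A₁ ∩ A₁) : ℚ)) (fun a _ => mod_cast card_le_card inter_subset_right)
    (by positivity)
  rw [← hA₂] at hsplit
  simp only [card_smul_inter_smul_eq_card_div_smul_inter A₁ _ ha₀'_ne] at hsum
  have hsum_eq : (#A₁ : ℚ) ^ 3 / #(A₁ * A₁) = 2 * (#A₁ * t) := by ring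
  have hN : (0 : ℚ) < #A₁ := mod_cast hA₁.card_pos
  exact le_of_mul_le_mul_left (by linarith) hN
end

section
/- Let G be a cyclic group of order t generated by g, let d₀ ≥ 1, and let A₂ ⊆ {g^x : L+1 ≤ x ≤ L+M} be a set such that every a ∈ A₂ satisfies ord(a·(a₀')⁻¹) ≤ d₀ for some fixed a₀' = g^{x₀} with L+1 ≤ x₀ ≤ L+M. Then #A₂ ≤ (M d₀/t + 1)·τ(t), where τ(t) is the number of divisors of t. -/
/-!
If `a = g ^ x` and `a * (g ^ x₀)⁻¹` has order `d`, then `t / d ∣ x - x₀`. So the exponents of the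
elements of `A₂` whose quotient by `g ^ x₀` has order `d ≤ d₀` lie in one residue class modulo
`t / d` inside an interval of length `M`, which holds at most `M * d / t + 1` integers. Summing over
the divisors `d` of `t` gives the bound.
-/

open Finset

theorem Int.card_Ioc_filter_modEq_le (a v : ℤ) (M : ℕ) {r : ℤ} (hr : 0 < r) :
    (#{x ∈ Ioc a (a + M) | x ≡ v [ZMOD r]} : ℚ) ≤ M / r + 1 := by
  have hcard : (#{x ∈ Ioc a (a + M) | x ≡ v [ZMOD r]} : ℚ) =
      max (⌊((a + M : ℤ) - v) / (r : ℚ)⌋ - ⌊(a - v) / (r : ℚ)⌋ : ℤ) 0 := by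
    rw [← Int.Ioc_filter_modEq_card _ _ hr, Int.cast_natCast]
  have hshift : ((a + M : ℤ) - v) / (r : ℚ) = (a - v) / r + M / r := by
    push_cast; ring
  have hupper := Int.floor_le (((a + M : ℤ) - v) / (r : ℚ))
  have hlower := Int.lt_floor_add_one ((a - v) / (r : ℚ))
  rw [hcard, Int.cast_max, max_le_iff]
  push_cast at hupper hshift ⊢
  exact ⟨by linarith, by positivity⟩

theorem orderOf_div_orderOf_zpow_dvd {G : Type*} [Group G] {g : G} (hg : 0 < orderOf g) (k : ℤ) :
    ((orderOf g / orderOf (g ^ k) : ℕ) : ℤ) ∣ k := by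
  have hdvd : orderOf (g ^ k) ∣ orderOf g := orderOf_dvd_of_pow_eq_one zpow_pow_orderOf
  have hpos : 0 < orderOf (g ^ k) := Nat.pos_of_dvd_of_pos hdvd hg
  have hmul : (orderOf g : ℤ) ∣ k * orderOf (g ^ k) := by
    rw [orderOf_dvd_iff_zpow_eq_one, zpow_mul, zpow_natCast, pow_orderOf_eq_one]
  rw [← Nat.div_mul_cancel hdvd, Nat.cast_mul] at hmul
  exact (mul_dvd_mul_iff_right (by exact_mod_cast hpos.ne')).1 hmul

theorem card_filter_orderOf_zpow_sub_eq_le {G : Type*} [Group G] {g : G} (hg : 0 < orderOf g)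
    {d : ℕ} (hd : d ∣ orderOf g) (L x₀ : ℤ) (M : ℕ) :
    (#{x ∈ Ioc L (L + M) | orderOf (g ^ (x - x₀)) = d} : ℚ) ≤ M * d / orderOf g + 1 := by
  have hdpos : 0 < d := Nat.pos_of_dvd_of_pos hd hg
  have hquot : 0 < orderOf g / d := Nat.div_pos (Nat.le_of_dvd hg hd) hdpos
  have hsub : {x ∈ Ioc L (L + M) | orderOf (g ^ (x - x₀)) = d} ⊆
      {x ∈ Ioc L (L + M) | x ≡ x₀ [ZMOD (orderOf g / d : ℕ)]} := by
    refine monotone_filter_right _ fun x _ hx => ?_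
    rw [Int.modEq_iff_dvd, ← hx, dvd_sub_comm]
    exact orderOf_div_orderOf_zpow_dvd hg _
  calc (#{x ∈ Ioc L (L + M) | orderOf (g ^ (x - x₀)) = d} : ℚ)
      ≤ #{x ∈ Ioc L (L + M) | x ≡ x₀ [ZMOD (orderOf g / d : ℕ)]} := by
        exact_mod_cast card_le_card hsub
    _ ≤ M / ((orderOf g / d : ℕ) : ℤ) + 1 :=
        Int.card_Ioc_filter_modEq_le _ _ _ (by exact_mod_cast hquot)
    _ = M * d / orderOf g + 1 := by
        rw [Int.cast_natCast, Nat.cast_div hd (by exact_mod_cast hdpos.ne')]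
        field_simp

theorem stmt_5_general {G : Type*} [Group G] (g : G) (t : ℕ) (ht : orderOf g = t) (htpos : 0 < t)
    (d₀ : ℕ) (M : ℕ) (L x₀ : ℤ)
    (A₂ : Finset G)
    (hA₂sub : ∀ a ∈ A₂, ∃ x : ℤ, x ∈ Set.Icc (L + 1) (L + (M : ℤ)) ∧ a = g ^ x)
    (hord : ∀ a ∈ A₂, orderOf (a * (g ^ x₀)⁻¹) ≤ d₀) :
    (A₂.card : ℚ) ≤ ((M : ℚ) * d₀ / t + 1) * (t.divisors.card : ℚ) := by
  classical
  subst ht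
  set S := {x ∈ Ioc L (L + M) | orderOf (g ^ (x - x₀)) ≤ d₀}
  have hA₂ : A₂ ⊆ S.image (g ^ ·) := by
    intro a ha
    obtain ⟨x, ⟨hxL, hxM⟩, rfl⟩ := hA₂sub a ha
    have hxord := hord _ ha
    rw [← zpow_neg, ← zpow_add, ← sub_eq_add_neg] at hxord
    exact mem_image.2 ⟨x, mem_filter.2 ⟨mem_Ioc.2 ⟨by omega, hxM⟩, hxord⟩, rfl⟩
  have hfibers : #S = ∑ d ∈ (orderOf g).divisors, #{x ∈ S | orderOf (g ^ (x - x₀)) = d} :=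
    card_eq_sum_card_fiberwise fun x _ => Nat.mem_divisors.2
      ⟨orderOf_dvd_of_pow_eq_one zpow_pow_orderOf, htpos.ne'⟩
  have hfiber : ∀ d ∈ (orderOf g).divisors,
      (#{x ∈ S | orderOf (g ^ (x - x₀)) = d} : ℚ) ≤ M * d₀ / orderOf g + 1 := by
    intro d hd
    by_cases hdd₀ : d ≤ d₀
    · calc (#{x ∈ S | orderOf (g ^ (x - x₀)) = d} : ℚ)
          ≤ #{x ∈ Ioc L (L + M) | orderOf (g ^ (x - x₀)) = d} := by
            exact_mod_cast card_le_card (filter_subset_filter _ (filter_subset _ _))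
        _ ≤ M * d / orderOf g + 1 :=
            card_filter_orderOf_zpow_sub_eq_le htpos (Nat.dvd_of_mem_divisors hd) L x₀ M
        _ ≤ M * d₀ / orderOf g + 1 := by gcongr
    · have hempty : {x ∈ S | orderOf (g ^ (x - x₀)) = d} = ∅ :=
        filter_eq_empty_iff.2 fun x hx hxd => hdd₀ (hxd ▸ (mem_filter.1 hx).2)
      rw [hempty, card_empty, Nat.cast_zero]
      positivity
  calc (#A₂ : ℚ) ≤ #S := by exact_mod_cast (card_le_card hA₂).trans card_image_le
    _ ≤ ∑ d ∈ (orderOf g).divisors, (M * d₀ / orderOf g + 1 : ℚ) := by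
        rw [hfibers, Nat.cast_sum]
        exact sum_le_sum hfiber
    _ = _ := by rw [sum_const, nsmul_eq_mul, mul_comm]

theorem stmt_5 {G : Type*} [Group G] (g : G) (t : ℕ) (ht : orderOf g = t) (htpos : 0 < t)
    (d₀ : ℕ) (hd₀ : 1 ≤ d₀) (M : ℕ) (L x₀ : ℤ)
    (hx₀ : x₀ ∈ Set.Icc (L + 1) (L + (M : ℤ)))
    (A₂ : Finset G)
    (hA₂sub : ∀ a ∈ A₂, ∃ x : ℤ, x ∈ Set.Icc (L + 1) (L + (M : ℤ)) ∧ a = g ^ x)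
    (hord : ∀ a ∈ A₂, orderOf (a * (g ^ x₀)⁻¹) ≤ d₀) :
    (A₂.card : ℚ) ≤ ((M : ℚ) * d₀ / t + 1) * (t.divisors.card : ℚ) :=
  stmt_5_general g t ht htpos d₀ M L x₀ A₂ hA₂sub hord
end

section
/- Let A, B be finite subsets of F_p, with B nonempty. Then |Σ_{a∈A} Σ_{b∈B} e_p(ab)|⁸ ≤ p·(#A)⁴·(#B)⁴·E₊(A,A)·E₊(B,B), where e_p(z) = exp(2πi z/p) and E₊(S,T) = #{(s₁,s₂,t₁,t₂) ∈ S²×T² : s₁ + t₁ = s₂ + t₂} is the additive energy. -/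
/-!
Cauchy–Schwarz over `a ∈ A` bounds `|S|²` by `|A| ∑_{a ∈ A} |∑_{b ∈ B} ψ(ab)|²`, and expanding the
square turns this sum into `∑_d r(d) f(d)` with `f(d) = ∑_{a ∈ A} ψ(ad)` and `r(d)` the number of
ways to write `d = b - b'` (counted as `b + c` with `c ∈ -B`). Hölder in the form
`(∑ r |f|)⁴ ≤ (∑ r)² (∑ r²) (∑ |f|⁴)` then finishes: `∑ r = |B|²`, `∑ r² = E(B)`, and since `f²` is
the Fourier transform of the representation function of `A + A`, Parseval gives `∑ |f|⁴ = |R| E(A)`.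
-/

open Finset

/-- The standard additive character of `ZMod p`. -/
noncomputable def ep (p : ℕ) (z : ZMod p) : ℂ :=
  Complex.exp (2 * Real.pi * Complex.I * (z.val : ℂ) / (p : ℂ))

open scoped Combinatorics.Additive ComplexConjugate Pointwise

namespace Finset

lemma sum_mul_pow_four_le {ι R : Type*} [CommSemiring R] [LinearOrder R] [IsStrictOrderedRing R]
    [ExistsAddOfLE R] (s : Finset ι) {u : ι → R} (v : ι → R) (hu : ∀ i ∈ s, 0 ≤ u i) :
    (∑ i ∈ s, u i * v i) ^ 4 ≤ (∑ i ∈ s, u i) ^ 2 * (∑ i ∈ s, u i ^ 2) * ∑ i ∈ s, v i ^ 4 := by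
  have weighted : (∑ i ∈ s, u i * v i) ^ 2 ≤ (∑ i ∈ s, u i) * ∑ i ∈ s, u i * v i ^ 2 :=
    sum_sq_le_sum_mul_sum_of_sq_le_mul s hu (fun i hi => mul_nonneg (hu i hi) (sq_nonneg _))
      fun i _ => (by ring : (u i * v i) ^ 2 = u i * (u i * v i ^ 2)).le
  have plain : (∑ i ∈ s, u i * v i ^ 2) ^ 2 ≤ (∑ i ∈ s, u i ^ 2) * ∑ i ∈ s, v i ^ 4 := by
    convert sum_mul_sq_le_sq_mul_sq s u (v · ^ 2) using 3 with i
    ring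
  calc (∑ i ∈ s, u i * v i) ^ 4 = ((∑ i ∈ s, u i * v i) ^ 2) ^ 2 := by ring
    _ ≤ ((∑ i ∈ s, u i) * ∑ i ∈ s, u i * v i ^ 2) ^ 2 := pow_le_pow_left₀ (sq_nonneg _) weighted 2
    _ ≤ (∑ i ∈ s, u i) ^ 2 * ((∑ i ∈ s, u i ^ 2) * ∑ i ∈ s, v i ^ 4) := by
      rw [mul_pow]
      exact mul_le_mul_of_nonneg_left plain (sq_nonneg _)
    _ = _ := by ring

variable {α : Type*} [AddCommGroup α] [DecidableEq α]

lemma addEnergy_neg_right (s t : Finset α) : E[s, -t] = E[s, t] := by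
  refine card_nbij' (fun x => (x.1, -x.2.2, -x.2.1)) (fun x => (x.1, -x.2.2, -x.2.1))
    ?_ ?_ (fun _ _ => by simp) (fun _ _ => by simp) <;>
  · rintro ⟨⟨a₁, a₂⟩, b₁, b₂⟩
    simp only [coe_filter, mem_product, mem_neg', neg_neg, Set.mem_ofPred_eq]
    rintro ⟨⟨⟨ha₁, ha₂⟩, hb₁, hb₂⟩, h⟩
    refine ⟨⟨⟨ha₁, ha₂⟩, hb₂, hb₁⟩, ?_⟩
    rwa [← sub_eq_add_neg, ← sub_eq_add_neg, sub_eq_sub_iff_add_eq_add]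

lemma sum_card_filter_add_eq_card_mul [Fintype α] (s t : Finset α) :
    ∑ c, #{ab ∈ s ×ˢ t | ab.1 + ab.2 = c} = #s * #t :=
  (card_eq_sum_card_fiberwise fun _ _ => mem_univ _).symm.trans (card_product s t)

end Finset

namespace AddChar

variable {R : Type*} [CommRing R] [Fintype R] [DecidableEq R] (ψ : AddChar R ℂ)

lemma sum_apply_mul_mul_sum_apply_mul (s t : Finset R) (x : R) :
    (∑ a ∈ s, ψ (a * x)) * ∑ b ∈ t, ψ (b * x)
      = ∑ c, (#{ab ∈ s ×ˢ t | ab.1 + ab.2 = c} : ℂ) * ψ (c * x) := by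
  rw [sum_mul_sum, ← sum_product', ← sum_fiberwise (s ×ˢ t) (fun ab => ab.1 + ab.2)]
  refine sum_congr rfl fun c _ => ?_
  rw [← nsmul_eq_mul, ← sum_const]
  refine sum_congr rfl fun ab hab => ?_
  rw [← (mem_filter.1 hab).2, add_mul, map_add_eq_mul]

lemma sum_norm_sum_mul_apply_mul_sq (hψ : ψ.IsPrimitive) (g : R → ℂ) :
    ∑ x, ‖∑ c, g c * ψ (c * x)‖ ^ 2 = Fintype.card R * ∑ c, ‖g c‖ ^ 2 := by
  apply Complex.ofReal_injective
  push_cast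
  simp_rw [← Complex.mul_conj', map_sum, map_mul, ← map_neg_eq_conj, sum_mul_sum, mul_sum]
  rw [sum_comm]
  refine sum_congr rfl fun c _ => ?_
  rw [sum_comm]
  have orthogonality (y : R) : ∑ x, g c * ψ (c * x) * (conj (g y) * ψ (-(y * x)))
      = g c * conj (g y) * ∑ x, ψ (x * (c - y)) := by
    rw [mul_sum]
    refine sum_congr rfl fun x _ => ?_
    rw [show x * (c - y) = c * x + -(y * x) by ring, map_add_eq_mul]
    ring
  simp only [orthogonality, sum_mulShift _ hψ, sub_eq_zero, Nat.cast_ite, Nat.cast_zero, mul_ite,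
    mul_zero, sum_ite_eq, mem_univ, if_true]
  ring

lemma sum_norm_sum_apply_mul_pow_four (hψ : ψ.IsPrimitive) (s : Finset R) :
    ∑ x, ‖∑ a ∈ s, ψ (a * x)‖ ^ 4 = Fintype.card R * E[s] := by
  have hsq (x : R) : ‖∑ a ∈ s, ψ (a * x)‖ ^ 4
      = ‖∑ c, (#{ab ∈ s ×ˢ s | ab.1 + ab.2 = c} : ℂ) * ψ (c * x)‖ ^ 2 := by
    rw [← sum_apply_mul_mul_sum_apply_mul, norm_mul]; ring
  simp_rw [hsq, sum_norm_sum_mul_apply_mul_sq ψ hψ, Complex.norm_natCast, addEnergy_eq_sum_sq]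
  push_cast
  rfl

lemma sum_norm_sum_apply_mul_sq_le (A B : Finset R) :
    ∑ a ∈ A, ‖∑ b ∈ B, ψ (a * b)‖ ^ 2
      ≤ ∑ d, (#{bc ∈ B ×ˢ (-B) | bc.1 + bc.2 = d} : ℝ) * ‖∑ a ∈ A, ψ (a * d)‖ := by
  have expand : ((∑ a ∈ A, ‖∑ b ∈ B, ψ (a * b)‖ ^ 2 : ℝ) : ℂ)
      = ∑ d, (#{bc ∈ B ×ˢ (-B) | bc.1 + bc.2 = d} : ℂ) * ∑ a ∈ A, ψ (a * d) := by
    push_cast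
    simp_rw [← Complex.mul_conj', map_sum, ← map_neg_eq_conj]
    have hconv (a : R) : (∑ b ∈ B, ψ (a * b)) * ∑ b ∈ B, ψ (-(a * b))
        = ∑ d, (#{bc ∈ B ×ˢ (-B) | bc.1 + bc.2 = d} : ℂ) * ψ (d * a) := by
      rw [← sum_apply_mul_mul_sum_apply_mul, sum_neg_index]
      simp only [mul_comm a, neg_mul]
    simp_rw [hconv, mul_sum]
    rw [sum_comm]
    exact sum_congr rfl fun d _ => sum_congr rfl fun a _ => by rw [mul_comm d a]
  calc ∑ a ∈ A, ‖∑ b ∈ B, ψ (a * b)‖ ^ 2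
      ≤ ‖((∑ a ∈ A, ‖∑ b ∈ B, ψ (a * b)‖ ^ 2 : ℝ) : ℂ)‖ := by
        rw [Complex.norm_real]; exact le_abs_self _
    _ ≤ _ := by
        rw [expand]
        refine (norm_sum_le _ _).trans_eq (sum_congr rfl fun d _ => ?_)
        rw [norm_mul, Complex.norm_natCast]

theorem IsPrimitive.norm_sum_sum_apply_mul_pow_eight_le {ψ : AddChar R ℂ} (hψ : ψ.IsPrimitive)
    (A B : Finset R) :
    ‖∑ a ∈ A, ∑ b ∈ B, ψ (a * b)‖ ^ 8
      ≤ Fintype.card R * (#A : ℝ) ^ 4 * (#B : ℝ) ^ 4 * E[A] * E[B] := by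
  set r : R → ℝ := fun d => #{bc ∈ B ×ˢ (-B) | bc.1 + bc.2 = d}
  set f : R → ℝ := fun d => ‖∑ a ∈ A, ψ (a * d)‖
  have cauchySchwarz : ‖∑ a ∈ A, ∑ b ∈ B, ψ (a * b)‖ ^ 2
      ≤ #A * ∑ a ∈ A, ‖∑ b ∈ B, ψ (a * b)‖ ^ 2 :=
    (pow_le_pow_left₀ (norm_nonneg _) (norm_sum_le _ _) 2).trans (sq_sum_le_card_mul_sum_sq ..)
  have sum_r : ∑ d, r d = #B ^ 2 := by
    simp only [r]
    exact_mod_cast (sum_card_filter_add_eq_card_mul B (-B)).trans (by rw [card_neg, sq])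
  have sum_r_sq : ∑ d, r d ^ 2 = E[B] := by
    rw [← addEnergy_neg_right, addEnergy_eq_sum_sq]
    push_cast
    rfl
  calc ‖∑ a ∈ A, ∑ b ∈ B, ψ (a * b)‖ ^ 8 = (‖∑ a ∈ A, ∑ b ∈ B, ψ (a * b)‖ ^ 2) ^ 4 := by ring
    _ ≤ (#A * ∑ a ∈ A, ‖∑ b ∈ B, ψ (a * b)‖ ^ 2) ^ 4 :=
      pow_le_pow_left₀ (sq_nonneg _) cauchySchwarz 4
    _ ≤ (#A * ∑ d, r d * f d) ^ 4 := by gcongr; exact ψ.sum_norm_sum_apply_mul_sq_le A B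
    _ = #A ^ 4 * (∑ d, r d * f d) ^ 4 := by ring
    _ ≤ #A ^ 4 * ((∑ d, r d) ^ 2 * (∑ d, r d ^ 2) * ∑ d, f d ^ 4) := by
      gcongr
      exact sum_mul_pow_four_le univ f fun _ _ => Nat.cast_nonneg _
    _ = _ := by
      rw [sum_r, sum_r_sq, ψ.sum_norm_sum_apply_mul_pow_four hψ]
      ring

end AddChar

lemma ep_eq_stdAddChar {p : ℕ} [NeZero p] (z : ZMod p) : ep p z = ZMod.stdAddChar z := by
  rw [ZMod.stdAddChar_apply, ZMod.toCircle_apply, ep]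

theorem stmt_8_general {p : ℕ} (hp : p.Prime) (A B : Finset (ZMod p)) :
    ‖∑ a ∈ A, ∑ b ∈ B, ep p (a * b)‖ ^ 8
      ≤ (p : ℝ) * (A.card : ℝ) ^ 4 * (B.card : ℝ) ^ 4 *
        (Finset.addEnergy A A : ℝ) * (Finset.addEnergy B B : ℝ) := by
  have : NeZero p := ⟨hp.ne_zero⟩
  simpa only [ep_eq_stdAddChar, ZMod.card] using
    (ZMod.isPrimitive_stdAddChar p).norm_sum_sum_apply_mul_pow_eight_le A B

theorem stmt_8 {p : ℕ} (hp : p.Prime) (A B : Finset (ZMod p)) (hB : B.Nonempty) :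
    ‖∑ a ∈ A, ∑ b ∈ B, ep p (a * b)‖ ^ 8
      ≤ (p : ℝ) * (A.card : ℝ) ^ 4 * (B.card : ℝ) ^ 4 *
        (Finset.addEnergy A A : ℝ) * (Finset.addEnergy B B : ℝ) :=
  stmt_8_general hp A B
end
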